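/- arXiv:1412.8269 — 3 statements merged into one kernel-verified Lean document; each statement's English description precedes it below -/
import Mathlib

section
/- Let K be a finite simplicial complex, σ a simplex of K, v a vertex of σ, and σ' = σ \ {v}. Then the map φ_v sending an oriented chain simplex τ of link_K σ to τ*(v) (the join with v appended) defines a cochain map from the reduced simplicial cochain complex of link_K σ to that of link_K σ' raising degree by 1, i.e. φ_v commutes with the simplicial coboundary δ. -/
open Finset

/-- A finite abstract simplicial complex with vertices in `ℕ`. -/
structure SC where
  faces : Finset (Finset ℕ)
  down_closed : ∀ ⦃s t : Finset ℕ⦄, s ∈ faces → t ⊆ s → t ∈ faces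

namespace SC

/-- The vertex set of a simplicial complex. -/
def verts (K : SC) : Finset ℕ := K.faces.sup id

/-- The dimension of a simplicial complex (dimension of `{∅}` is `-1`). -/
def dim (K : SC) : ℤ := ((K.faces.sup Finset.card : ℕ) : ℤ) - 1

/-- The link of a simplex. -/
def link (K : SC) (σ : Finset ℕ) : SC where
  faces := K.faces.filter fun t => σ ∪ t ∈ K.faces ∧ Disjoint σ t
  down_closed := by
    intro s t hs hts
    simp only [mem_filter] at hs ⊢
    refine ⟨K.down_closed hs.1 hts, K.down_closed hs.2.1 (union_subset_union_right hts),
      hs.2.2.mono_right ?_⟩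
    exact_mod_cast hts

/-- `K₁` is a subcomplex of `K`. -/
def IsSub (K₁ K : SC) : Prop := K₁.faces ⊆ K.faces

/-- Union of two simplicial complexes. -/
def union (K L : SC) : SC where
  faces := K.faces ∪ L.faces
  down_closed := by
    intro s t hs hts
    rcases mem_union.mp hs with h | h
    · exact mem_union_left _ (K.down_closed h hts)
    · exact mem_union_right _ (L.down_closed h hts)

/-- Intersection of two simplicial complexes. -/
def inter (K L : SC) : SC where
  faces := K.faces ∩ L.faces
  down_closed := by
    intro s t hs hts
    rw [mem_inter] at hs ⊢
    exact ⟨K.down_closed hs.1 hts, L.down_closed hs.2 hts⟩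

/-- The join of two simplicial complexes. -/
def join (K L : SC) : SC where
  faces := (K.faces ×ˢ L.faces).image fun x => x.1 ∪ x.2
  down_closed := by
    intro s t hs hts
    simp only [mem_image, mem_product] at hs ⊢
    obtain ⟨⟨a, b⟩, ⟨ha, hb⟩, rfl⟩ := hs
    refine ⟨⟨t ∩ a, t \ a⟩, ⟨K.down_closed ha inter_subset_right,
      L.down_closed hb fun x hx => ?_⟩, ?_⟩
    · rcases mem_union.mp (hts (mem_sdiff.mp hx).1) with h | h
      · exact absurd h (mem_sdiff.mp hx).2
      · exact h
    · ext x
      simp only [mem_union, mem_inter, mem_sdiff]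
      constructor
      · rintro (⟨h, _⟩ | ⟨h, _⟩) <;> exact h
      · intro hx
        by_cases hxa : x ∈ a
        · exact Or.inl ⟨hx, hxa⟩
        · exact Or.inr ⟨hx, hxa⟩

end SC
namespace SC
open Finset

/-- The sign of a vertex `v` in a simplex, given by its position in the canonical ordering. -/
def psgn (v : ℕ) (s : Finset ℕ) : ℤ := (-1) ^ (s.filter fun u => u < v).card

variable (G : Type) [AddCommGroup G]

/-- The submodule of functions supported on a given set of indices. -/
def suppM {α : Type} (P : α → Prop) : Submodule ℤ (α → G) where
  carrier := {c | ∀ x, c x ≠ 0 → P x}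
  add_mem' := by
    intro a b ha hb x hx
    by_cases h : a x = 0
    · exact hb x (by simpa [h] using hx)
    · exact ha x h
  zero_mem' := fun x hx => absurd rfl hx
  smul_mem' := by
    intro z a ha x hx
    exact ha x fun h => hx (by simp [h])

end SC
namespace SC
open Finset

variable (G : Type) [AddCommGroup G]

/-- The unreduced simplicial coboundary (as a map on coefficient functions). -/
def cobF (K : SC) (c : Finset ℕ → G) : Finset ℕ → G := fun ρ =>
  if ρ ∈ K.faces then
    ∑ w ∈ ρ, if ρ.erase w = ∅ then 0 else psgn w ρ • c (ρ.erase w)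
  else 0

/-- The reduced simplicial coboundary. -/
def cobRF (K : SC) (c : Finset ℕ → G) : Finset ℕ → G := fun ρ =>
  if ρ ∈ K.faces then ∑ w ∈ ρ, psgn w ρ • c (ρ.erase w) else 0

/-- The unreduced simplicial coboundary as a linear map. -/
def cobL (K : SC) : (Finset ℕ → G) →ₗ[ℤ] (Finset ℕ → G) where
  toFun := cobF G K
  map_add' := by
    intro a b
    funext ρ
    simp only [cobF, Pi.add_apply]
    split_ifs with h
    · rw [← Finset.sum_add_distrib]
      refine Finset.sum_congr rfl fun w _ => ?_
      split_ifs with h2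
      · simp
      · simp [smul_add]
    · simp
  map_smul' := by
    intro z a
    funext ρ
    simp only [cobF, Pi.smul_apply, RingHom.id_apply]
    split_ifs with h
    · rw [Finset.smul_sum]
      refine Finset.sum_congr rfl fun w _ => ?_
      split_ifs with h2
      · simp
      · rw [smul_smul, smul_smul, mul_comm]
    · simp

/-- The reduced simplicial coboundary as a linear map. -/
def cobRL (K : SC) : (Finset ℕ → G) →ₗ[ℤ] (Finset ℕ → G) where
  toFun := cobRF G K
  map_add' := by
    intro a b
    funext ρ
    simp only [cobRF, Pi.add_apply]
    split_ifs with h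
    · rw [← Finset.sum_add_distrib]
      exact Finset.sum_congr rfl fun w _ => smul_add _ _ _
    · simp
  map_smul' := by
    intro z a
    funext ρ
    simp only [cobRF, Pi.smul_apply, RingHom.id_apply]
    split_ifs with h
    · rw [Finset.smul_sum]
      refine Finset.sum_congr rfl fun w _ => ?_
      rw [smul_smul, smul_smul, mul_comm]
    · simp

/-- Degree-`q` unreduced simplicial cochains of `K` with coefficients in `G`. -/
def Cgr (K : SC) (q : ℤ) : Submodule ℤ (Finset ℕ → G) :=
  suppM G fun s => s ∈ K.faces ∧ s ≠ ∅ ∧ (s.card : ℤ) = q + 1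

/-- Degree-`q` reduced simplicial cochains (the empty simplex sits in degree `-1`). -/
def CgrR (K : SC) (q : ℤ) : Submodule ℤ (Finset ℕ → G) :=
  suppM G fun s => s ∈ K.faces ∧ (s.card : ℤ) = q + 1

/-- The degree-`q` simplicial cohomology of `K` with coefficients in `G`. -/
abbrev coh (K : SC) (q : ℤ) :=
  ↥(Cgr G K q ⊓ LinearMap.ker (cobL G K)) ⧸
    Submodule.comap (Cgr G K q ⊓ LinearMap.ker (cobL G K)).subtype
      (Submodule.map (cobL G K) (Cgr G K (q - 1)))

/-- The degree-`q` reduced simplicial cohomology of `K` with coefficients in `G`. -/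
abbrev cohR (K : SC) (q : ℤ) :=
  ↥(CgrR G K q ⊓ LinearMap.ker (cobRL G K)) ⧸
    Submodule.comap (CgrR G K q ⊓ LinearMap.ker (cobRL G K)).subtype
      (Submodule.map (cobRL G K) (CgrR G K (q - 1)))

end SC
lemma sign_lemma (ρ : Finset ℕ) (v w : ℕ) (hvρ : v ∈ ρ) (hwρ : w ∈ ρ) (hwv : w ≠ v) :
    SC.psgn w ρ * (-1 : ℤ) ^ ((ρ.erase w).filter fun u => v < u).card
      = (-1 : ℤ) ^ (ρ.filter fun u => v < u).card * SC.psgn w (ρ.erase v) := by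
  unfold SC.psgn
  rw [← pow_add, ← pow_add, Finset.filter_erase, Finset.filter_erase]
  congr 1
  rcases lt_or_gt_of_ne hwv with h | h
  · -- w < v
    rw [Finset.erase_eq_of_notMem (by simp [not_lt.mpr h.le]),
      Finset.erase_eq_of_notMem (by simp [not_lt.mpr h.le])]
    omega
  · -- v < w
    have hw' : w ∈ ρ.filter fun u => v < u := Finset.mem_filter.mpr ⟨hwρ, h⟩
    have hv' : v ∈ ρ.filter fun u => u < w := Finset.mem_filter.mpr ⟨hvρ, h⟩
    rw [Finset.card_erase_of_mem hw', Finset.card_erase_of_mem hv']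
    have h1 : 1 ≤ (ρ.filter fun u => v < u).card := Finset.card_pos.mpr ⟨w, hw'⟩
    have h2 : 1 ≤ (ρ.filter fun u => u < w).card := Finset.card_pos.mpr ⟨v, hv'⟩
    omega

lemma link_iff (K : SC) (σ : Finset ℕ) (v : ℕ) (hv : v ∈ σ)
    (ρ : Finset ℕ) (hvρ : v ∈ ρ) :
    ρ ∈ (K.link (σ.erase v)).faces ↔ ρ.erase v ∈ (K.link σ).faces := by
  have hU : σ.erase v ∪ ρ = σ ∪ ρ.erase v := by
    ext x
    simp only [Finset.mem_union, Finset.mem_erase]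
    constructor
    · rintro (⟨_, h⟩ | h)
      · exact Or.inl h
      · by_cases hx : x = v
        · exact Or.inl (hx ▸ hv)
        · exact Or.inr ⟨hx, h⟩
    · rintro (h | ⟨hx, h⟩)
      · by_cases hx : x = v
        · exact Or.inr (hx ▸ hvρ)
        · exact Or.inl ⟨hx, h⟩
      · exact Or.inr h
  simp only [SC.link, Finset.mem_filter]
  constructor
  · rintro ⟨h1, h2, h3⟩
    rw [hU] at h2
    refine ⟨K.down_closed h2 ?_, h2, ?_⟩
    · exact Finset.subset_union_right
    · rw [Finset.disjoint_right]
      intro x hx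
      rcases Finset.mem_erase.mp hx with ⟨hxv, hxρ⟩
      intro hxσ
      exact Finset.disjoint_right.mp h3 hxρ (Finset.mem_erase.mpr ⟨hxv, hxσ⟩)
  · rintro ⟨h1, h2, h3⟩
    rw [← hU] at h2
    refine ⟨K.down_closed h2 Finset.subset_union_right, h2, ?_⟩
    rw [Finset.disjoint_left]
    intro x hx
    rcases Finset.mem_erase.mp hx with ⟨hxv, hxσ⟩
    intro hxρ
    exact Finset.disjoint_left.mp h3 hxσ (Finset.mem_erase.mpr ⟨hxv, hxρ⟩)

/-- For `v ∈ σ ∈ K` and `σ' = σ \ {v}`, the map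
`φ_v : τ ↦ τ * (v)` is a cochain map of degree `+1` from the reduced cochain
complex of `link_K σ` to that of `link_K σ'`: it commutes with `δ`. -/
theorem phi_v_cochain_map (K : SC) (σ : Finset ℕ) (hσ : σ ∈ K.faces)
    (v : ℕ) (hv : v ∈ σ)
    (Φ : (Finset ℕ → ℤ) → (Finset ℕ → ℤ))
    (hΦ : Φ = fun c ρ => if v ∈ ρ then
      (-1 : ℤ) ^ (ρ.filter fun u => v < u).card * c (ρ.erase v) else 0) :
    ∀ c : Finset ℕ → ℤ, (∀ s, c s ≠ 0 → s ∈ (K.link σ).faces) →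
      SC.cobRF ℤ (K.link (σ.erase v)) (Φ c) = Φ (SC.cobRF ℤ (K.link σ) c) := by
  subst hΦ
  intro c _
  funext ρ
  simp only [SC.cobRF]
  by_cases hvρ : v ∈ ρ
  · rw [if_pos hvρ]
    have hiff := link_iff K σ v hv ρ hvρ
    by_cases hρ : ρ ∈ (K.link (σ.erase v)).faces
    · rw [if_pos hρ, if_pos (hiff.mp hρ), Finset.mul_sum,
        ← Finset.sum_erase_add ρ _ hvρ]
      have hv0 : (if v ∈ ρ.erase v then
          (-1 : ℤ) ^ ((ρ.erase v).filter fun u => v < u).card * c ((ρ.erase v).erase v)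
          else 0) = 0 := if_neg (Finset.notMem_erase v ρ)
      rw [smul_eq_mul, hv0, mul_zero, add_zero]
      refine Finset.sum_congr rfl fun w hw => ?_
      rcases Finset.mem_erase.mp hw with ⟨hwv, hwρ⟩
      have hvw : v ∈ ρ.erase w := Finset.mem_erase.mpr ⟨fun h => hwv h.symm, hvρ⟩
      rw [if_pos hvw, smul_eq_mul, smul_eq_mul, Finset.erase_right_comm]
      rw [← mul_assoc, ← mul_assoc, sign_lemma ρ v w hvρ hwρ hwv]
    · rw [if_neg hρ, if_neg (fun h => hρ (hiff.mpr h)), mul_zero]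
  · rw [if_neg hvρ]
    split_ifs with hρ
    · refine Finset.sum_eq_zero fun w hw => ?_
      have : v ∉ ρ.erase w := fun h => hvρ (Finset.mem_of_mem_erase h)
      rw [if_neg this, smul_zero]
    · rfl
end

section
/- If K_1 and K_2 are two distinct completely connected components of a finite simplicial complex K, then dim(K_1 ∩ K_2) < min{dim K_1, dim K_2}. -/
open Finset

namespace SC
open Finset

/-- Two equal-dimensional simplices of `K₁` are adjacent if they share a common
codimension-one face (a common facet). -/
def cAdj (K₁ : SC) (s t : Finset ℕ) : Prop :=
  s ∈ K₁.faces ∧ t ∈ K₁.faces ∧ s.card = t.card ∧ (s ∩ t).card + 1 = s.card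

/-- `K₁` is completely connected: any two simplices of the same dimension are
joined by a chain of simplices of that dimension, consecutive ones sharing a
common facet. -/
def CompConn (K₁ : SC) : Prop :=
  ∀ s ∈ K₁.faces, ∀ t ∈ K₁.faces, s.card = t.card → Relation.ReflTransGen (cAdj K₁) s t

/-- `K₁` is a completely connected component of `K`: a maximal completely
connected subcomplex. -/
def IsCCComp (K K₁ : SC) : Prop :=
  K₁.IsSub K ∧ CompConn K₁ ∧ ∀ K₂ : SC, K₂.IsSub K → CompConn K₂ → K₁.IsSub K₂ → K₂ = K₁

end SC

/-!
If `dim (K₁ ∩ K₂) ≥ min (dim K₁) (dim K₂)`, then in every dimension in which both `K₁` and `K₂`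
have a simplex, `K₁ ∩ K₂` has one too (faces of a simplex of the intersection). Chains in `K₁`
and in `K₂` can then be concatenated through it, so `K₁ ∪ K₂` is completely connected, and
maximality forces `K₁ = K₁ ∪ K₂ = K₂`.
-/

namespace SC

lemma cAdj_mono {K L : SC} (hKL : K.IsSub L) {s t : Finset ℕ} (h : cAdj K s t) : cAdj L s t :=
  ⟨hKL h.1, hKL h.2.1, h.2.2⟩

lemma reflTransGen_cAdj_mono {K L : SC} (hKL : K.IsSub L) {s t : Finset ℕ}
    (h : Relation.ReflTransGen (cAdj K) s t) : Relation.ReflTransGen (cAdj L) s t :=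
  Relation.ReflTransGen.mono (fun _ _ => cAdj_mono hKL) _ _ h

lemma isSub_union_left (K L : SC) : K.IsSub (K.union L) := subset_union_left

lemma isSub_union_right (K L : SC) : L.IsSub (K.union L) := subset_union_right

lemma union_isSub {K L M : SC} (hK : K.IsSub M) (hL : L.IsSub M) : (K.union L).IsSub M :=
  union_subset hK hL

lemma exists_mem_faces_card_eq {K : SC} (hK : K.faces.Nonempty) {k : ℕ}
    (hk : k ≤ K.faces.sup card) : ∃ σ ∈ K.faces, σ.card = k := by
  obtain ⟨τ, hτ, hτcard⟩ := exists_mem_eq_sup _ hK card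
  obtain ⟨σ, hστ, hσcard⟩ := exists_subset_card_eq (hτcard ▸ hk)
  exact ⟨σ, K.down_closed hτ hστ, hσcard⟩

lemma compConn_union {K L : SC} (hK : CompConn K) (hL : CompConn L)
    (hKL : ∀ s ∈ K.faces, ∀ t ∈ L.faces, s.card = t.card →
      ∃ σ ∈ (K.inter L).faces, σ.card = s.card) :
    CompConn (K.union L) := by
  have hK' : ∀ {s t}, Relation.ReflTransGen (cAdj K) s t →
      Relation.ReflTransGen (cAdj (K.union L)) s t :=
    reflTransGen_cAdj_mono (isSub_union_left K L)
  have hL' : ∀ {s t}, Relation.ReflTransGen (cAdj L) s t →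
      Relation.ReflTransGen (cAdj (K.union L)) s t :=
    reflTransGen_cAdj_mono (isSub_union_right K L)
  intro s hs t ht hst
  rcases mem_union.mp hs with hsK | hsL <;> rcases mem_union.mp ht with htK | htL
  · exact hK' (hK s hsK t htK hst)
  · obtain ⟨σ, hσ, hσcard⟩ := hKL s hsK t htL hst
    rw [inter, mem_inter] at hσ
    exact (hK' (hK s hsK σ hσ.1 hσcard.symm)).trans (hL' (hL σ hσ.2 t htL (hσcard.trans hst)))
  · obtain ⟨σ, hσ, hσcard⟩ := hKL t htK s hsL hst.symm
    rw [inter, mem_inter] at hσ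
    exact (hL' (hL s hsL σ hσ.2 (hst.trans hσcard.symm))).trans (hK' (hK σ hσ.1 t htK hσcard))
  · exact hL' (hL s hsL t htL hst)

lemma exists_mem_inter_card_eq {K L : SC}
    (hKL : min (K.faces.sup card) (L.faces.sup card) ≤ (K.inter L).faces.sup card)
    {s t : Finset ℕ} (hs : s ∈ K.faces) (ht : t ∈ L.faces) (hst : s.card = t.card) :
    ∃ σ ∈ (K.inter L).faces, σ.card = s.card := by
  have hne : (K.inter L).faces.Nonempty :=
    ⟨∅, mem_inter.mpr ⟨K.down_closed hs (empty_subset _), L.down_closed ht (empty_subset _)⟩⟩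
  refine exists_mem_faces_card_eq hne (le_trans ?_ hKL)
  exact le_min (le_sup hs) (hst ▸ le_sup ht)

end SC

/-- Two distinct completely connected components intersect in
dimension strictly less than either of their dimensions. -/
theorem ccc_inter_dim_lt (K K₁ K₂ : SC)
    (h₁ : SC.IsCCComp K K₁) (h₂ : SC.IsCCComp K K₂) (hne : K₁ ≠ K₂) :
    (K₁.inter K₂).dim < min K₁.dim K₂.dim := by
  by_contra! hle
  have hsup : min (K₁.faces.sup card) (K₂.faces.sup card) ≤ (K₁.inter K₂).faces.sup card := by
    simp only [SC.dim] at hle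
    omega
  have hconn : (K₁.union K₂).CompConn := SC.compConn_union h₁.2.1 h₂.2.1
    fun _ hs _ ht hst => SC.exists_mem_inter_card_eq hsup hs ht hst
  have hsub : (K₁.union K₂).IsSub K := SC.union_isSub h₁.1 h₂.1
  have e₁ := h₁.2.2 _ hsub hconn (SC.isSub_union_left K₁ K₂)
  have e₂ := h₂.2.2 _ hsub hconn (SC.isSub_union_right K₁ K₂)
  exact hne (e₁.symm.trans e₂)
end

section
/- Let 𝒢 be a finite graph (1-dimensional simplicial complex) with vertex set S, and let S' ⊆ S. Let C^0(S') be the subgroup of the simplicial 0-cochains freely generated by S'. Then the image δ(C^0(S')) under the simplicial coboundary map δ is a direct summand of C^1(𝒢). -/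
open Finset

section Aux
open SC Finset

lemma mem_suppM {G : Type} [AddCommGroup G] {α : Type} {P : α → Prop} {c : α → G} :
    c ∈ suppM G P ↔ ∀ x, c x ≠ 0 → P x := Iff.rfl

lemma cobL_apply (𝒢 : SC) (c : Finset ℕ → ℤ) (ρ : Finset ℕ) :
    cobL ℤ 𝒢 c ρ = if ρ ∈ 𝒢.faces then
      ∑ w ∈ ρ, if ρ.erase w = ∅ then 0 else psgn w ρ • c (ρ.erase w) else 0 := rfl

lemma psgn_pair_left {u v : ℕ} (h : u < v) : psgn u {u, v} = 1 := by
  unfold psgn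
  have h0 : ({u, v} : Finset ℕ).filter (fun w => w < u) = ∅ := by
    rw [Finset.filter_eq_empty_iff]
    intro x hx
    rcases Finset.mem_insert.mp hx with rfl | hx
    · omega
    · rw [Finset.mem_singleton] at hx; omega
  rw [h0]; simp

lemma psgn_pair_right {u v : ℕ} (h : u < v) : psgn v {u, v} = -1 := by
  unfold psgn
  have h0 : ({u, v} : Finset ℕ).filter (fun w => w < v) = {u} := by
    ext x
    simp only [Finset.mem_filter, Finset.mem_insert, Finset.mem_singleton]
    constructor
    · rintro ⟨rfl | rfl, hx⟩
      · rfl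
      · omega
    · rintro rfl; exact ⟨Or.inl rfl, h⟩
  rw [h0]; simp

lemma psgn_pair_add {u v : ℕ} (h : u ≠ v) : psgn u {u, v} + psgn v {u, v} = 0 := by
  rcases lt_or_gt_of_ne h with h' | h'
  · rw [psgn_pair_left h', psgn_pair_right h']; ring
  · rw [Finset.pair_comm, psgn_pair_left h', psgn_pair_right h']; ring

lemma psgn_sq (u : ℕ) (s : Finset ℕ) : psgn u s * psgn u s = 1 := by
  unfold psgn; rw [← mul_pow]; norm_num

lemma erase_pair_left {u v : ℕ} (h : u ≠ v) : ({u, v} : Finset ℕ).erase u = {v} :=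
  Finset.erase_insert (by simpa using h)

lemma erase_pair_right {u v : ℕ} (h : u ≠ v) : ({u, v} : Finset ℕ).erase v = {u} := by
  rw [Finset.pair_comm]; exact erase_pair_left h.symm

lemma cob_pair (𝒢 : SC) (c : Finset ℕ → ℤ) {u v : ℕ} (h : u ≠ v)
    (hf : ({u, v} : Finset ℕ) ∈ 𝒢.faces) :
    cobL ℤ 𝒢 c {u, v} = psgn u {u, v} * c {v} + psgn v {u, v} * c {u} := by
  rw [cobL_apply, if_pos hf, Finset.sum_pair h, erase_pair_left h, erase_pair_right h,
    if_neg (Finset.singleton_ne_empty v), if_neg (Finset.singleton_ne_empty u)]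
  simp [smul_eq_mul]

lemma key (𝒢 : SC) (hgraph : ∀ s ∈ 𝒢.faces, s.card ≤ 2) (S' : Finset ℕ) (n : ℤ) (hn : n ≠ 0)
    (x c : Finset ℕ → ℤ) (hc : c ∈ suppM ℤ fun s => ∃ v ∈ S', s = {v})
    (h : n • x = cobL ℤ 𝒢 c) :
    ∃ c' ∈ suppM ℤ (fun s : Finset ℕ => ∃ v ∈ S', s = {v}), cobL ℤ 𝒢 c' = x := by
  classical
  set r : ℕ → ℕ → Prop := fun u v => ({u, v} : Finset ℕ) ∈ 𝒢.faces with hr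
  have edge : ∀ u v, r u v → n ∣ c {v} - c {u} := by
    intro u v huv
    by_cases he : u = v
    · subst he; simp
    · have hval := congrFun h ({u, v} : Finset ℕ)
      rw [cob_pair 𝒢 c he huv] at hval
      have h2 : psgn v {u, v} = - psgn u {u, v} := by
        have := psgn_pair_add he; linarith
      have hd : n ∣ psgn u {u, v} * (c {v} - c {u}) := by
        refine ⟨x {u, v}, ?_⟩
        rw [h2] at hval
        simp only [Pi.smul_apply, smul_eq_mul] at hval
        linarith
      have hd2 : n ∣ psgn u {u, v} * (psgn u {u, v} * (c {v} - c {u})) := hd.mul_left _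
      rwa [← mul_assoc, psgn_sq, one_mul] at hd2
  have cong : ∀ u v : ℕ, Quot.mk r u = Quot.mk r v → n ∣ c {u} - c {v} := by
    intro u v huv
    have hE := Quot.eq.mp huv
    clear huv
    induction hE with
    | rel a b hab =>
        have := edge a b hab
        rw [← neg_sub]; exact this.neg_right
    | refl a => simp
    | symm a b _ ih => rw [← neg_sub]; exact ih.neg_right
    | trans a b d _ _ ih1 ih2 =>
        have := dvd_add ih1 ih2
        rwa [sub_add_sub_cancel] at this
  set Kf : ℕ → ℤ := fun v =>
    if (∀ u, Quot.mk r u = Quot.mk r v → u ∈ S') then c {(Quot.mk r v).out} else 0 with hKf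
  have Keq : ∀ u v, Quot.mk r u = Quot.mk r v → Kf u = Kf v := by
    intro u v huv
    simp only [hKf, huv]
  have Kdvd : ∀ v : ℕ, n ∣ c {v} - Kf v := by
    intro v
    by_cases hfull : ∀ u, Quot.mk r u = Quot.mk r v → u ∈ S'
    · rw [hKf]; simp only [if_pos hfull]
      exact cong v (Quot.mk r v).out (Quot.out_eq (Quot.mk r v)).symm
    · rw [hKf]; simp only [if_neg hfull, sub_zero]
      push_neg at hfull
      obtain ⟨u, hu1, hu2⟩ := hfull
      have hcu : c {u} = 0 := by
        by_contra hne
        obtain ⟨w, hw, hw2⟩ := hc _ hne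
        exact hu2 (by rwa [Finset.singleton_injective hw2])
      have := cong v u hu1.symm
      rwa [hcu, sub_zero] at this
  have Kmem : ∀ v : ℕ, Kf v ≠ 0 → v ∈ S' := by
    intro v hv
    rw [hKf] at hv
    by_cases hfull : ∀ u, Quot.mk r u = Quot.mk r v → u ∈ S'
    · exact hfull v rfl
    · simp only [if_neg hfull] at hv; exact absurd rfl hv
  set k : Finset ℕ → ℤ := fun s => if h1 : ∃ v, s = {v} then Kf h1.choose else 0 with hk
  have kspec : ∀ v : ℕ, k {v} = Kf v := by
    intro v
    have hex : ∃ w, ({v} : Finset ℕ) = {w} := ⟨v, rfl⟩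
    rw [hk]; simp only [dif_pos hex]
    congr 1
    exact (Finset.singleton_injective hex.choose_spec).symm
  have hdvd : ∀ s, n ∣ c s - k s := by
    intro s
    by_cases h1 : ∃ v : ℕ, s = {v}
    · obtain ⟨v, rfl⟩ := h1; rw [kspec]; exact Kdvd v
    · rw [hk]; simp only [dif_neg h1, sub_zero]
      have : c s = 0 := by
        by_contra hne
        obtain ⟨w, _, hw2⟩ := hc _ hne
        exact h1 ⟨w, hw2⟩
      simp [this]
  set c' : Finset ℕ → ℤ := fun s => (c s - k s) / n with hc'
  have hnc' : ∀ s, n * c' s = c s - k s := fun s => Int.mul_ediv_cancel' (hdvd s)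
  refine ⟨c', ?_, ?_⟩
  · intro s hs
    have hne : c s - k s ≠ 0 := by
      intro h0
      apply hs
      show (c s - k s) / n = 0
      rw [h0]; simp
    by_cases hcs : c s ≠ 0
    · exact hc _ hcs
    · push_neg at hcs
      have hks : k s ≠ 0 := by intro h0; rw [hcs, h0] at hne; simp at hne
      rw [hk] at hks
      by_cases h1 : ∃ v : ℕ, s = {v}
      · obtain ⟨v, rfl⟩ := h1
        have := kspec v
        rw [hk] at this
        rw [this] at hks
        exact ⟨v, Kmem v hks, rfl⟩
      · simp only [dif_neg h1] at hks; exact absurd rfl hks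
  · have hkzero : cobL ℤ 𝒢 k = 0 := by
      funext ρ
      rw [cobL_apply]
      split_ifs with hρ
      · have hcard := hgraph ρ hρ
        rcases Nat.lt_or_ge ρ.card 2 with hlt | hge
        · rcases Nat.lt_or_ge ρ.card 1 with h0 | h1
          · have : ρ = ∅ := Finset.card_eq_zero.mp (by omega)
            subst this; simp
          · have : ρ.card = 1 := by omega
            obtain ⟨w, rfl⟩ := Finset.card_eq_one.mp this
            rw [Finset.sum_singleton, Finset.erase_singleton, if_pos rfl]; rfl
        · have h2 : ρ.card = 2 := by omega
          obtain ⟨u, v, huv, rfl⟩ := Finset.card_eq_two.mp h2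
          rw [Finset.sum_pair huv, erase_pair_left huv, erase_pair_right huv,
            if_neg (Finset.singleton_ne_empty v), if_neg (Finset.singleton_ne_empty u),
            kspec, kspec]
          have hK : Kf u = Kf v := Keq u v (Quot.sound hρ)
          have h3 : psgn v {u, v} = - psgn u {u, v} := by
            have := psgn_pair_add huv; linarith
          rw [hK, h3]
          simp only [smul_eq_mul, Pi.zero_apply]
          ring
      · rfl
    have hsm : n • c' = c - k := by funext s; simpa using hnc' s
    have : n • cobL ℤ 𝒢 c' = n • x := by
      rw [← map_smul, hsm, map_sub, hkzero, sub_zero, ← h]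
    exact smul_right_injective (Finset ℕ → ℤ) hn this

lemma mapped_le (𝒢 : SC) (S' : Finset ℕ) :
    Submodule.map (cobL ℤ 𝒢) (suppM ℤ fun s : Finset ℕ => ∃ v ∈ S', s = {v}) ≤
      Cgr ℤ 𝒢 1 := by
  rintro y ⟨c, hc, rfl⟩
  intro ρ hρ
  rw [cobL_apply] at hρ
  by_cases hf : ρ ∈ 𝒢.faces
  · rw [if_pos hf] at hρ
    obtain ⟨w, hw, hterm⟩ := Finset.exists_ne_zero_of_sum_ne_zero hρ
    by_cases he : ρ.erase w = ∅
    · rw [if_pos he] at hterm; exact absurd rfl hterm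
    · rw [if_neg he] at hterm
      have hcz : c (ρ.erase w) ≠ 0 := by
        intro h0; rw [h0] at hterm; simp at hterm
      obtain ⟨v, _, hv⟩ := hc _ hcz
      have hcard : ρ.card = 2 := by
        have h1 : (ρ.erase w).card = 1 := by rw [hv]; simp
        have := Finset.card_erase_of_mem hw
        have hpos := Finset.card_pos.mpr ⟨w, hw⟩
        omega
      exact ⟨hf, Finset.ne_empty_of_mem hw, by rw [hcard]; norm_num⟩
  · rw [if_neg hf] at hρ; exact absurd rfl hρ

lemma Cgr_fg (𝒢 : SC) : (Cgr ℤ 𝒢 1).FG := by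
  classical
  set T : Finset (Finset ℕ) := 𝒢.faces.filter (fun s => s ≠ ∅ ∧ (s.card : ℤ) = 2) with hT
  refine ⟨T.image (fun s => Pi.single s (1 : ℤ)), le_antisymm ?_ ?_⟩
  · rw [Submodule.span_le]
    intro y hy
    simp only [Finset.coe_image, Set.mem_image, Finset.mem_coe] at hy
    obtain ⟨s, hs, rfl⟩ := hy
    rw [hT, Finset.mem_filter] at hs
    intro t ht
    have : t = s := by
      by_contra hne
      rw [Pi.single_apply, if_neg hne] at ht
      exact ht rfl
    subst this
    exact ⟨hs.1, hs.2.1, hs.2.2⟩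
  · intro c hc
    have hrep : c = ∑ s ∈ T, (c s) • (Pi.single s (1 : ℤ) : Finset ℕ → ℤ) := by
      funext t
      rw [Finset.sum_apply]
      have heq : ∀ s ∈ T, (c s • (Pi.single s (1 : ℤ) : Finset ℕ → ℤ)) t
          = if t = s then c s else 0 := by
        intro s _
        rw [Pi.smul_apply, Pi.single_apply]
        split_ifs <;> simp
      rw [Finset.sum_congr rfl heq, Finset.sum_ite_eq]
      split_ifs with ht
      · rfl
      · by_contra hne
        have hmem := hc t (fun h0 => hne (by rw [h0]))
        exact ht (by rw [hT, Finset.mem_filter]; exact ⟨hmem.1, hmem.2.1, hmem.2.2⟩)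
    rw [hrep]
    refine Submodule.sum_mem _ (fun s hs => Submodule.smul_mem _ _ ?_)
    apply Submodule.subset_span
    simp only [Finset.coe_image, Set.mem_image, Finset.mem_coe]
    exact ⟨s, hs, rfl⟩

end Aux

/-- For a graph `𝒢` and a subset `S'` of its vertices, the
image `δ(C⁰(S'))` is a direct summand of `C¹(𝒢)`. -/
theorem graph_coboundary_summand (𝒢 : SC) (hgraph : ∀ s ∈ 𝒢.faces, s.card ≤ 2)
    (S' : Finset ℕ) (hS' : S' ⊆ 𝒢.verts) :
    ∃ A : Submodule ℤ (Finset ℕ → ℤ),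
      A ⊓ Submodule.map (SC.cobL ℤ 𝒢)
          (SC.suppM ℤ fun s => ∃ v ∈ S', s = {v}) = ⊥ ∧
      A ⊔ Submodule.map (SC.cobL ℤ 𝒢)
          (SC.suppM ℤ fun s => ∃ v ∈ S', s = {v}) = SC.Cgr ℤ 𝒢 1 := by
  classical
  set D : Submodule ℤ (Finset ℕ → ℤ) :=
    Submodule.map (SC.cobL ℤ 𝒢) (SC.suppM ℤ fun s => ∃ v ∈ S', s = {v}) with hD
  set C : Submodule ℤ (Finset ℕ → ℤ) := SC.Cgr ℤ 𝒢 1 with hC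
  have hDC : D ≤ C := mapped_le 𝒢 S'
  set D' : Submodule ℤ ↥C := Submodule.comap C.subtype D with hD'
  have hfinC : Module.Finite ℤ ↥C := Module.Finite.iff_fg.mpr (Cgr_fg 𝒢)
  have htf : NoZeroSMulDivisors ℤ (↥C ⧸ D') := by
    constructor
    intro n z hz
    by_cases hn : n = 0
    · exact Or.inl hn
    · right
      obtain ⟨⟨y, hyC⟩, rfl⟩ := Submodule.mkQ_surjective D' z
      rw [← map_smul, Submodule.mkQ_apply, Submodule.Quotient.mk_eq_zero] at hz
      have hy : n • y ∈ D := hz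
      obtain ⟨c, hcc, hcy⟩ := hy
      obtain ⟨c', hc', hcy'⟩ := key 𝒢 hgraph S' n hn y c hcc hcy.symm
      have hyD : y ∈ D := ⟨c', hc', hcy'⟩
      rw [Submodule.mkQ_apply, Submodule.Quotient.mk_eq_zero]
      exact hyD
  have hfree : Module.Free ℤ (↥C ⧸ D') := Module.free_of_finite_type_torsion_free'
  have hproj : Module.Projective ℤ (↥C ⧸ D') := inferInstance
  obtain ⟨sec, hsec⟩ :=
    Module.projective_lifting_property D'.mkQ LinearMap.id (Submodule.mkQ_surjective D')
  have hsec' : ∀ q, D'.mkQ (sec q) = q := fun q => LinearMap.ext_iff.mp hsec q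
  refine ⟨Submodule.map C.subtype (LinearMap.range sec), ?_, ?_⟩
  · rw [eq_bot_iff]
    intro y hy
    rw [Submodule.mem_inf] at hy
    obtain ⟨hyA, hyD⟩ := hy
    obtain ⟨z, ⟨q, rfl⟩, rfl⟩ := hyA
    have hz : sec q ∈ D' := hyD
    have h0 : D'.mkQ (sec q) = 0 := by
      rw [Submodule.mkQ_apply, Submodule.Quotient.mk_eq_zero]; exact hz
    have hq : q = 0 := by rw [← hsec' q, h0]
    rw [hq, map_zero, map_zero]
    exact Submodule.zero_mem ⊥
  · apply le_antisymm
    · exact sup_le (Submodule.map_subtype_le C _) hDC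
    · intro y hy
      set q := D'.mkQ ⟨y, hy⟩ with hq
      have h1 : (↑(sec q) : Finset ℕ → ℤ) ∈ Submodule.map C.subtype (LinearMap.range sec) :=
        ⟨sec q, ⟨q, rfl⟩, rfl⟩
      have h2 : y - ↑(sec q) ∈ D := by
        have hm : (⟨y, hy⟩ - sec q : ↥C) ∈ D' := by
          have h3 : D'.mkQ ((⟨y, hy⟩ : ↥C) - sec q) = 0 := by
            rw [map_sub, hsec' q, hq, sub_self]
          rwa [Submodule.mkQ_apply, Submodule.Quotient.mk_eq_zero] at h3
        have h4 : C.subtype ((⟨y, hy⟩ : ↥C) - sec q) ∈ D := hm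
        simpa using h4
      have := Submodule.add_mem_sup h1 h2
      simpa using this
end
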